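/- Let Ξ ∈ ℂ^{n × L} be the matrix of DMD modes with columns ξ_1, …, ξ_L, let λ_1, …, λ_L ∈ ℂ be the DMD eigenvalues, let V_and ∈ ℂ^{L × m} be the Vandermonde matrix with entries (V_and)_{l,k} = λ_l^{k−1}, and let Q_1 ∈ ℂ^{n × m} be a data matrix. Then a vector a = (a_1, …, a_L)ᵀ ∈ ℂ^L minimizes the Frobenius-norm objective ‖Q_1 − Ξ diag(a_1, …, a_L) V_and‖_F² if and only if it satisfies the linear system ((Ξ*Ξ) ∘ conj(V_and V_and*)) a = conj(diag-vector(V_and Q_1* Ξ)), where ∘ denotes the Hadamard (entrywise) product, * denotes the conjugate transpose, conj denotes entrywise complex conjugation, and diag-vector(M) denotes the vector of diagonal entries of the square matrix M. -/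

import Mathlib

/-!
Write `Ξ diag(b) V_and = T b` entrywise, where `T = khatriRao Ξ V_andᵀ` is the Khatri–Rao
(column-wise Kronecker) product, whose `l`-th column is `ξ_l` ⊗ (row `l` of `V_and`). The
objective is then the ordinary least-squares functional `‖vec Q₁ - T b‖²`, minimised exactly
where the residual is orthogonal to the range of `T`, i.e. where `Tᴴ T a = Tᴴ vec Q₁`. Finally
`Tᴴ T = (ΞᴴΞ) ∘ conj(V_and V_andᴴ)` and `Tᴴ vec Q₁ = conj(diag(V_and Q₁ᴴ Ξ))`.
-/

open Matrix

theorem Submodule.forall_norm_sub_le_iff_inner_eq_zero {𝕜 E : Type*} [RCLike 𝕜]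
    [NormedAddCommGroup E] [InnerProductSpace 𝕜 E] (K : Submodule 𝕜 E) {u v : E} (hv : v ∈ K) :
    (∀ w ∈ K, ‖u - v‖ ≤ ‖u - w‖) ↔ ∀ w ∈ K, inner 𝕜 (u - v) w = 0 := by
  have hbdd : BddBelow (Set.range fun w : K => ‖u - w‖) := ⟨0, by
    rintro _ ⟨w, rfl⟩; exact norm_nonneg _⟩
  rw [← norm_eq_iInf_iff_inner_eq_zero K hv]
  constructor
  · intro h
    exact le_antisymm (le_ciInf fun w => h w w.2) (ciInf_le hbdd ⟨v, hv⟩)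
  · intro h w hw
    exact h ▸ ciInf_le hbdd ⟨w, hw⟩

namespace Matrix

theorem forall_sum_norm_sq_sub_mulVec_le_iff {ι κ 𝕜 : Type*} [Fintype ι] [Fintype κ] [RCLike 𝕜]
    (T : Matrix ι κ 𝕜) (y : ι → 𝕜) (a : κ → 𝕜) :
    (∀ b, ∑ i, ‖y i - (T *ᵥ a) i‖ ^ 2 ≤ ∑ i, ‖y i - (T *ᵥ b) i‖ ^ 2) ↔
      (Tᴴ * T) *ᵥ a = Tᴴ *ᵥ y := by
  let f : (κ → 𝕜) →ₗ[𝕜] EuclideanSpace 𝕜 ι :=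
    (WithLp.linearEquiv 2 𝕜 (ι → 𝕜)).symm.toLinearMap ∘ₗ T.mulVecLin
  have hf : ∀ b, f b = WithLp.toLp 2 (T *ᵥ b) := fun _ => rfl
  have hnorm : ∀ b, ∑ i, ‖y i - (T *ᵥ b) i‖ ^ 2 = ‖WithLp.toLp 2 y - f b‖ ^ 2 := by
    intro b
    rw [hf, ← WithLp.toLp_sub, EuclideanSpace.norm_sq_eq]
    rfl
  have hinner : ∀ b, inner 𝕜 (WithLp.toLp 2 y - f a) (f b) = star (Tᴴ *ᵥ (y - T *ᵥ a)) ⬝ᵥ b := by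
    intro b
    rw [hf, hf, ← WithLp.toLp_sub, EuclideanSpace.inner_toLp_toLp, dotProduct_comm,
      dotProduct_mulVec, star_mulVec, conjTranspose_conjTranspose]
  have key := (LinearMap.range f).forall_norm_sub_le_iff_inner_eq_zero
    (u := WithLp.toLp 2 y) (LinearMap.mem_range_self f a)
  simp only [LinearMap.mem_range, forall_exists_index, forall_apply_eq_imp_iff, hinner] at key
  simp only [hnorm, pow_le_pow_iff_left₀ (norm_nonneg _) (norm_nonneg _) two_ne_zero]
  rw [key, dotProduct_eq_zero_iff, star_eq_zero, mulVec_sub, sub_eq_zero, mulVec_mulVec, eq_comm]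

def khatriRao {m n l α : Type*} [Mul α] (A : Matrix m l α) (B : Matrix n l α) :
    Matrix (m × n) l α :=
  fun p j => A p.1 j * B p.2 j

section KhatriRao

variable {m n l α : Type*} [CommSemiring α]

theorem mul_diagonal_mul_apply [Fintype l] [DecidableEq l] (A : Matrix m l α) (b : l → α)
    (B : Matrix l n α) (i : m) (k : n) :
    (A * diagonal b * B) i k = (khatriRao A Bᵀ *ᵥ b) (i, k) := by
  rw [mul_apply]
  simp only [mul_diagonal, mulVec, dotProduct, khatriRao, transpose_apply]
  exact Finset.sum_congr rfl fun j _ => by ring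

variable [Fintype m] [Fintype n] [StarRing α]

theorem conjTranspose_khatriRao_mul_khatriRao (A : Matrix m l α) (B : Matrix n l α) :
    (khatriRao A B)ᴴ * khatriRao A B = (Aᴴ * A) ⊙ (Bᴴ * B) := by
  ext j j'
  simp only [mul_apply, conjTranspose_apply, khatriRao, hadamard_apply, Fintype.sum_prod_type,
    star_mul', Finset.sum_mul_sum]
  exact Finset.sum_congr rfl fun i _ => Finset.sum_congr rfl fun k _ => by ring

theorem conjTranspose_khatriRao_mulVec_uncurry [Fintype l] (A : Matrix m l α) (B : Matrix l n α)
    (Y : Matrix m n α) (j : l) :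
    ((khatriRao A Bᵀ)ᴴ *ᵥ Function.uncurry Y) j = (Aᴴ * Y * Bᴴ) j j := by
  simp only [mulVec, dotProduct, mul_apply, conjTranspose_apply, khatriRao, transpose_apply,
    Fintype.sum_prod_type, Function.uncurry, star_mul', Finset.sum_mul]
  rw [Finset.sum_comm]
  exact Finset.sum_congr rfl fun i _ => Finset.sum_congr rfl fun k _ => by ring

end KhatriRao

end Matrix

theorem optimal_dmd_amplitudes_iff_normal_equations_general
    (n L m : ℕ)
    (Xi : Matrix (Fin n) (Fin L) ℂ)
    (Vand : Matrix (Fin L) (Fin m) ℂ)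
    (Q1 : Matrix (Fin n) (Fin m) ℂ)
    (a : Fin L → ℂ) :
    (∀ b : Fin L → ℂ,
        (∑ i : Fin n, ∑ k : Fin m,
          Complex.normSq (Q1 i k - (Xi * Matrix.diagonal a * Vand) i k)) ≤
        (∑ i : Fin n, ∑ k : Fin m,
          Complex.normSq (Q1 i k - (Xi * Matrix.diagonal b * Vand) i k))) ↔
      ((Xiᴴ * Xi) ⊙ ((Vand * Vandᴴ).map (starRingEnd ℂ))) *ᵥ a =
        fun l : Fin L => starRingEnd ℂ ((Vand * Q1ᴴ * Xi) l l) := by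
  have hobj : ∀ b : Fin L → ℂ,
      ∑ i, ∑ k, Complex.normSq (Q1 i k - (Xi * diagonal b * Vand) i k) =
        ∑ p, ‖Function.uncurry Q1 p - (khatriRao Xi Vandᵀ *ᵥ b) p‖ ^ 2 := by
    intro b
    simp only [Fintype.sum_prod_type, mul_diagonal_mul_apply, Function.uncurry,
      Complex.normSq_eq_norm_sq]
  have hgram : Vandᵀᴴ * Vandᵀ = (Vand * Vandᴴ).map (starRingEnd ℂ) := by
    ext j j'
    simp [mul_apply, mul_comm]
  simp only [hobj]
  rw [forall_sum_norm_sq_sub_mulVec_le_iff, conjTranspose_khatriRao_mul_khatriRao, hgram]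
  have hrhs : Xiᴴ * Q1 * Vandᴴ = (Vand * Q1ᴴ * Xi)ᴴ := by
    simp only [conjTranspose_mul, conjTranspose_conjTranspose, Matrix.mul_assoc]
  refine Eq.congr_right (funext fun l => ?_)
  rw [conjTranspose_khatriRao_mulVec_uncurry, hrhs, conjTranspose_apply, Complex.star_def]

/-- **Normal equations for the optimal DMD amplitudes** (Jovanović et al.).
Let `Ξ ∈ ℂ^{n × L}` be the DMD modes, `λ : Fin L → ℂ` the DMD eigenvalues,
`V_and ∈ ℂ^{L × m}` the Vandermonde matrix with `(V_and)_{l,k} = λ_l^k`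
(`k = 0, …, m−1`), and `Q₁ ∈ ℂ^{n × m}` a data matrix.  Then `a ∈ ℂ^L`
minimizes the squared Frobenius norm `‖Q₁ − Ξ diag(a) V_and‖_F²` if and only if
`((Ξ*Ξ) ∘ conj(V_and V_and*)) a = conj(diag-vector(V_and Q₁* Ξ))`,
where `∘` is the Hadamard product, `*` the conjugate transpose, `conj` the
entrywise complex conjugation, and `diag-vector` extracts the diagonal. -/
theorem optimal_dmd_amplitudes_iff_normal_equations
    (n L m : ℕ)
    (Xi : Matrix (Fin n) (Fin L) ℂ)
    (lam : Fin L → ℂ)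
    (Vand : Matrix (Fin L) (Fin m) ℂ)
    (hVand : ∀ (l : Fin L) (k : Fin m), Vand l k = lam l ^ (k : ℕ))
    (Q1 : Matrix (Fin n) (Fin m) ℂ)
    (a : Fin L → ℂ) :
    (∀ b : Fin L → ℂ,
        (∑ i : Fin n, ∑ k : Fin m,
          Complex.normSq (Q1 i k - (Xi * Matrix.diagonal a * Vand) i k)) ≤
        (∑ i : Fin n, ∑ k : Fin m,
          Complex.normSq (Q1 i k - (Xi * Matrix.diagonal b * Vand) i k))) ↔
      ((Xiᴴ * Xi) ⊙ ((Vand * Vandᴴ).map (starRingEnd ℂ))) *ᵥ a =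
        fun l : Fin L => starRingEnd ℂ ((Vand * Q1ᴴ * Xi) l l) :=
  optimal_dmd_amplitudes_iff_normal_equations_general n L m Xi Vand Q1 a
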